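/- Let h ∈ ℂ and n ∈ ℤ≥0. Then for all η ∈ ℂ: (2n−2h+1)(2n−2h+2)(2n−2h+3) · η² · P_n(η; h−1) = 4(2n−2h+1) · P_{n+2}(η; h) − 16(n−h+1) · P_{n+1}(η; h) + 4(2n−2h+3) · P_n(η; h). -/

import Mathlib

open Complex Finset

/-- Rising Pochhammer symbol `(x)_m = x (x+1) ⋯ (x+m-1)`. -/
noncomputable def poch (x : ℂ) (m : ℕ) : ℂ := ∏ j ∈ Finset.range m, (x + j)

/-- Bessel polynomial `P_n(η; h) = y_n(η; -2h-1)` as a function of `η ∈ ℂ`. -/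
noncomputable def besselPoly (h : ℂ) (n : ℕ) (η : ℂ) : ℂ :=
  ∑ k ∈ Finset.range (n + 1),
    poch (-(n : ℂ)) k * poch ((n : ℂ) - 2 * h) k / (k.factorial : ℂ) * (-η / 2) ^ k

/-!
Write `P_n(η; h) = ∑ₖ T(a, b, k)` with `T(a, b, k) = (a)_k (b)_k / k! · (-η/2)^k`, `a = -n`,
`b = n - 2h`; the sum may run over any range beyond `n`, since `(-n)_k = 0` for `k > n`. The
polynomials `P_{n+2}(h)`, `P_{n+1}(h)`, `P_n(h)` and `P_n(h - 1)` then have the parameter pairs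
`(a - 2, b + 2)`, `(a - 1, b + 1)`, `(a, b)` and `(a, b + 2)`, and the relation holds
coefficientwise for arbitrary `a, b`: the right-hand combination vanishes at `k = 0, 1`, and at
`k + 2` it equals the left-hand coefficient at `k` times `η²`. After dividing out
`(a)_k (b + 2)_k / (k + 2)!` this is a polynomial identity in `a`, `b`, `k`.
-/

lemma poch_zero (x : ℂ) : poch x 0 = 1 := prod_range_zero _

lemma poch_one (x : ℂ) : poch x 1 = x := by simp [poch]

lemma poch_succ_right (x : ℂ) (k : ℕ) : poch x (k + 1) = poch x k * (x + k) :=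
  prod_range_succ _ _

lemma poch_succ_left (x : ℂ) (k : ℕ) : poch x (k + 1) = x * poch (x + 1) k := by
  simp only [poch, prod_range_succ', Nat.cast_add, Nat.cast_one, Nat.cast_zero, add_zero]
  rw [mul_comm]
  congr 1
  exact prod_congr rfl fun j _ => by ring

lemma poch_add_two_right (x : ℂ) (k : ℕ) :
    poch x (k + 2) = poch x k * (x + k) * (x + k + 1) := by
  rw [poch_succ_right, poch_succ_right]
  push_cast
  ring

lemma poch_add_two_left (x : ℂ) (k : ℕ) : poch x (k + 2) = x * (x + 1) * poch (x + 2) k := by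
  rw [poch_succ_left, poch_succ_left, add_assoc x 1 1, one_add_one_eq_two, mul_assoc]

lemma poch_neg_natCast_of_lt {n k : ℕ} (h : n < k) : poch (-n) k = 0 :=
  prod_eq_zero (mem_range.2 h) (by simp)

noncomputable def besselTerm (a b η : ℂ) (k : ℕ) : ℂ :=
  poch a k * poch b k / (k.factorial : ℂ) * (-η / 2) ^ k

lemma besselPoly_eq_sum_besselTerm (h η : ℂ) {n N : ℕ} (hN : n < N) :
    besselPoly h n η = ∑ k ∈ range N, besselTerm (-n) (n - 2 * h) η k := by
  refine sum_subset (range_subset_range.2 hN) fun k _ hk => ?_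
  rw [poch_neg_natCast_of_lt (by simpa using hk), zero_mul, zero_div, zero_mul]

noncomputable def christoffelComb (a b η : ℂ) (k : ℕ) : ℂ :=
  4 * (b - a + 1) * besselTerm (a - 2) (b + 2) η k
    - 8 * (b - a + 2) * besselTerm (a - 1) (b + 1) η k
    + 4 * (b - a + 3) * besselTerm a b η k

lemma christoffelComb_zero (a b η : ℂ) : christoffelComb a b η 0 = 0 := by
  simp only [christoffelComb, besselTerm, poch_zero, Nat.factorial_zero]
  ring

lemma christoffelComb_one (a b η : ℂ) : christoffelComb a b η 1 = 0 := by
  simp only [christoffelComb, besselTerm, poch_one, Nat.factorial_one]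
  ring

lemma christoffelComb_add_two (a b η : ℂ) (k : ℕ) :
    christoffelComb a b η (k + 2) =
      (b - a + 1) * (b - a + 2) * (b - a + 3) * η ^ 2 * besselTerm a (b + 2) η k := by
  have hk : k + 2 = k + 1 + 1 := rfl
  have hsub₂ : poch (a - 2) (k + 2) = (a - 2) * (a - 2 + 1) * poch a k := by
    rw [poch_add_two_left, sub_add_cancel]
  have hsub₁ : poch (a - 1) (k + 2) = (a - 1) * poch a k * (a + k) := by
    rw [hk, poch_succ_left, poch_succ_right, sub_add_cancel, mul_assoc]
  have hadd₁ : poch (b + 1) (k + 2) = (b + 1) * poch (b + 2) k * (b + 2 + k) := by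
    rw [hk, poch_succ_left, poch_succ_right, add_assoc b 1 1, one_add_one_eq_two, mul_assoc]
  have hfac : ((k + 2).factorial : ℂ) = (k + 1) * (k + 2) * k.factorial := by
    push_cast [Nat.factorial_succ]
    ring
  have hk₁ : (k + 1 : ℂ) ≠ 0 := by exact_mod_cast k.succ_ne_zero
  have hk₂ : (k + 2 : ℂ) ≠ 0 := by exact_mod_cast (k + 1).succ_ne_zero
  have hk! : (k.factorial : ℂ) ≠ 0 := by exact_mod_cast k.factorial_ne_zero
  simp only [christoffelComb, besselTerm, hsub₂, hsub₁, hadd₁, poch_add_two_right a,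
    poch_add_two_right (b + 2), poch_add_two_left b, hfac, pow_add]
  field_simp
  ring

lemma sum_range_add_two_christoffelComb (a b η : ℂ) (N : ℕ) :
    ∑ k ∈ range (N + 2), christoffelComb a b η k =
      (b - a + 1) * (b - a + 2) * (b - a + 3) * η ^ 2 *
        ∑ k ∈ range N, besselTerm a (b + 2) η k := by
  rw [sum_range_succ', sum_range_succ', christoffelComb_zero, christoffelComb_one, mul_sum]
  simp only [add_assoc, Nat.reduceAdd, add_zero, christoffelComb_add_two]

/-- The Christoffel relation (Theorem `thm:PhiPnoQM` of the paper) for the Bessel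
polynomials. -/
theorem bessel_christoffel (h : ℂ) (n : ℕ) (η : ℂ) :
    (2 * (n : ℂ) - 2 * h + 1) * (2 * (n : ℂ) - 2 * h + 2) * (2 * (n : ℂ) - 2 * h + 3) *
      η ^ 2 * besselPoly (h - 1) n η
    = 4 * (2 * (n : ℂ) - 2 * h + 1) * besselPoly h (n + 2) η
      - 16 * ((n : ℂ) - h + 1) * besselPoly h (n + 1) η
      + 4 * (2 * (n : ℂ) - 2 * h + 3) * besselPoly h n η := by
  have hlhs :
      besselPoly (h - 1) n η = ∑ k ∈ range (n + 1), besselTerm (-n) (n - 2 * h + 2) η k := by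
    rw [besselPoly_eq_sum_besselTerm _ _ n.lt_succ_self,
      show (n : ℂ) - 2 * (h - 1) = n - 2 * h + 2 by ring]
  have hrhs : 4 * (2 * (n : ℂ) - 2 * h + 1) * besselPoly h (n + 2) η
      - 16 * ((n : ℂ) - h + 1) * besselPoly h (n + 1) η
      + 4 * (2 * (n : ℂ) - 2 * h + 3) * besselPoly h n η
      = ∑ k ∈ range (n + 3), christoffelComb (-n) (n - 2 * h) η k := by
    simp only [christoffelComb, sum_add_distrib, sum_sub_distrib, ← mul_sum,
      besselPoly_eq_sum_besselTerm h η (show n + 2 < n + 3 by omega),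
      besselPoly_eq_sum_besselTerm h η (show n + 1 < n + 3 by omega),
      besselPoly_eq_sum_besselTerm h η (show n < n + 3 by omega)]
    push_cast
    ring_nf
  rw [hlhs, hrhs, sum_range_add_two_christoffelComb]
  ring
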